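/- arXiv:math/9411216 — 3 statements merged into one kernel-verified Lean document; each statement's English description precedes it below -/
import Mathlib

section
/- If a rectangle R = [0,a] × [0,b] is partitioned into finitely many axis-parallel rectangles, each having at least one side of integer length, then a ∈ ℤ or b ∈ ℤ. -/
open MeasureTheory Set Complex

/-- A closed axis-parallel rectangle with lower-left corner `(x, y)`, width `w`
and height `h`, as a subset of `ℝ × ℝ`. -/
def rect (x y w h : ℝ) : Set (ℝ × ℝ) := Set.Icc x (x + w) ×ˢ Set.Icc y (y + h)

/-- The corresponding open rectangle (the interior). -/
def orect (x y w h : ℝ) : Set (ℝ × ℝ) := Set.Ioo x (x + w) ×ˢ Set.Ioo y (y + h)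

noncomputable def cc : ℂ := 2 * Real.pi * Complex.I

lemma cc_ne : cc ≠ 0 := by
  simp [cc, Real.pi_ne_zero, Complex.I_ne_zero, Complex.ofReal_ne_zero]

noncomputable def G (x w : ℝ) : ℂ := ∫ t in Set.Icc x (x + w), Complex.exp (cc * t)

lemma G_eq (x w : ℝ) (hw : 0 ≤ w) :
    G x w = Complex.exp (cc * x) * (Complex.exp (cc * w) - 1) / cc := by
  have : G x w = ∫ t in x..(x+w), Complex.exp (cc * t) := by
    rw [intervalIntegral.integral_of_le (by linarith), G,
      MeasureTheory.integral_Icc_eq_integral_Ioc]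
  rw [this, integral_exp_mul_complex cc_ne]
  have : cc * ((x : ℝ) + w : ℝ) = cc * x + cc * w := by push_cast; ring
  rw [this, Complex.exp_add]
  ring

lemma G_zero_iff (x w : ℝ) (hw : 0 < w) : G x w = 0 ↔ ∃ m : ℤ, w = m := by
  rw [G_eq x w hw.le, div_eq_zero_iff, mul_eq_zero, sub_eq_zero]
  have : Complex.exp (cc * w) = 1 ↔ ∃ m : ℤ, w = m := by
    rw [Complex.exp_eq_one_iff]
    constructor
    · rintro ⟨m, hm⟩
      refine ⟨m, ?_⟩
      rw [cc] at hm
      have : (w : ℂ) = m := by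
        have hm' : (2 * (Real.pi:ℂ) * Complex.I) * w = (2 * (Real.pi:ℂ) * Complex.I) * m := by
          rw [hm]; ring
        exact mul_left_cancel₀ cc_ne hm'
      exact_mod_cast this
    · rintro ⟨m, hm⟩
      exact ⟨m, by rw [hm, cc]; push_cast; ring⟩
  simp [Complex.exp_ne_zero, cc_ne, this]

lemma orect_subset (x y w h : ℝ) : orect x y w h ⊆ rect x y w h :=
  Set.prod_mono Set.Ioo_subset_Icc_self Set.Ioo_subset_Icc_self

lemma rect_measurable (x y w h : ℝ) : MeasurableSet (rect x y w h) :=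
  measurableSet_Icc.prod measurableSet_Icc

lemma volume_rect (x y w h : ℝ) :
    volume (rect x y w h) = ENNReal.ofReal w * ENNReal.ofReal h := by
  rw [rect, Measure.volume_eq_prod, Measure.prod_prod, Real.volume_Icc, Real.volume_Icc,
    add_sub_cancel_left, add_sub_cancel_left]

lemma volume_orect (x y w h : ℝ) :
    volume (orect x y w h) = ENNReal.ofReal w * ENNReal.ofReal h := by
  rw [orect, Measure.volume_eq_prod, Measure.prod_prod, Real.volume_Ioo, Real.volume_Ioo,
    add_sub_cancel_left, add_sub_cancel_left]

lemma volume_rect_diff (x y w h : ℝ) :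
    volume (rect x y w h \ orect x y w h) = 0 := by
  have hm : MeasurableSet (orect x y w h) := measurableSet_Ioo.prod measurableSet_Ioo
  rw [measure_diff (orect_subset x y w h) hm.nullMeasurableSet
    (by rw [volume_orect]; exact ENNReal.mul_ne_top ENNReal.ofReal_ne_top ENNReal.ofReal_ne_top),
    volume_rect, volume_orect, tsub_self]

lemma rect_integral (X Y W H : ℝ) :
    ∫ p in rect X Y W H, Complex.exp (cc * p.1) * Complex.exp (cc * p.2) = G X W * G Y H := by
  have h := MeasureTheory.setIntegral_prod_mul (μ := (volume : Measure ℝ))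
    (ν := (volume : Measure ℝ)) (fun t : ℝ => Complex.exp (cc * t))
    (fun t : ℝ => Complex.exp (cc * t)) (Set.Icc X (X+W)) (Set.Icc Y (Y+H))
  rw [rect, G, G, ← h, ← Measure.volume_eq_prod]

/-- If the rectangle `[0,a] × [0,b]` is partitioned into finitely many axis-parallel
rectangles, each having at least one side of integer length, then `a ∈ ℤ` or `b ∈ ℤ`. -/
theorem stmt5 (a b : ℝ) (ha : 0 < a) (hb : 0 < b)
    (n : ℕ) (x y w h : Fin n → ℝ)
    (hw : ∀ i, 0 < w i) (hh : ∀ i, 0 < h i)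
    (hside : ∀ i, (∃ m : ℤ, w i = m) ∨ (∃ m : ℤ, h i = m))
    (hdisj : Pairwise fun i j =>
      Disjoint (orect (x i) (y i) (w i) (h i)) (orect (x j) (y j) (w j) (h j)))
    (hcover : (⋃ i, rect (x i) (y i) (w i) (h i)) = rect 0 0 a b) :
    (∃ m : ℤ, a = m) ∨ (∃ m : ℤ, b = m) := by
  set f : ℝ × ℝ → ℂ := fun p => Complex.exp (cc * p.1) * Complex.exp (cc * p.2) with hf
  have hfc : Continuous f := by
    apply Continuous.mul <;> exact Complex.continuous_exp.comp
      (continuous_const.mul (Complex.continuous_ofReal.comp (by fun_prop)))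
  have hIntR : IntegrableOn f (rect 0 0 a b) := by
    have hcpt : IsCompact (rect 0 0 a b) := by
      rw [rect, Set.Icc_prod_Icc]
      exact isCompact_Icc
    exact hfc.continuousOn.integrableOn_compact hcpt
  -- AE disjointness of the closed rectangles
  have haed : Pairwise (Function.onFun (AEDisjoint volume) fun i =>
      rect (x i) (y i) (w i) (h i)) := by
    intro i j hij
    have hsub : rect (x i) (y i) (w i) (h i) ∩ rect (x j) (y j) (w j) (h j) ⊆
        (rect (x i) (y i) (w i) (h i) \ orect (x i) (y i) (w i) (h i)) ∪
        (rect (x j) (y j) (w j) (h j) \ orect (x j) (y j) (w j) (h j)) := by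
      rintro p ⟨hpi, hpj⟩
      by_cases h1 : p ∈ orect (x i) (y i) (w i) (h i)
      · by_cases h2 : p ∈ orect (x j) (y j) (w j) (h j)
        · exact absurd (Set.mem_inter h1 h2)
            (Set.disjoint_iff_inter_eq_empty.1 (hdisj hij) ▸ Set.notMem_empty p)
        · exact Or.inr ⟨hpj, h2⟩
      · exact Or.inl ⟨hpi, h1⟩
    exact measure_mono_null hsub (measure_union_null (volume_rect_diff _ _ _ _)
      (volume_rect_diff _ _ _ _))
  have hIntU : IntegrableOn f (⋃ i, rect (x i) (y i) (w i) (h i)) := by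
    rw [hcover]; exact hIntR
  have h2 : ∫ p in rect 0 0 a b, f p
      = ∑ i, ∫ p in rect (x i) (y i) (w i) (h i), f p := by
    rw [← hcover, integral_iUnion_ae (fun i => (rect_measurable _ _ _ _).nullMeasurableSet)
      haed hIntU, tsum_fintype]
  have h3 : ∀ i, ∫ p in rect (x i) (y i) (w i) (h i), f p = 0 := by
    intro i
    rw [hf, rect_integral]
    rcases hside i with ⟨m, hm⟩ | ⟨m, hm⟩
    · rw [(G_zero_iff (x i) (w i) (hw i)).2 ⟨m, hm⟩, zero_mul]
    · rw [(G_zero_iff (y i) (h i) (hh i)).2 ⟨m, hm⟩, mul_zero]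
  have key : G 0 a * G 0 b = 0 := by
    rw [← rect_integral 0 0 a b, ← hf]
    rw [h2, Finset.sum_eq_zero fun i _ => h3 i]
  rcases mul_eq_zero.1 key with hk | hk
  · exact Or.inl ((G_zero_iff 0 a ha).1 hk)
  · exact Or.inr ((G_zero_iff 0 b hb).1 hk)
end

section
/- Let A be a subgroup of ℝ. In the free product G = (ℝ/A) * (ℝ/A) with injections h, v, the commutator [h(t₁ mod A), v(t₂ mod A)] is trivial if and only if t₁ ∈ A or t₂ ∈ A. Consequently, if a t₁ × t₂ rectangle is partitioned into rectangles each having a side of length in A, then t₁ ∈ A or t₂ ∈ A. -/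
open Monoid

/-- The free product `(ℝ/A) ∗ (ℝ/A)` for an additive subgroup `A ≤ ℝ`. -/
abbrev GA (A : AddSubgroup ℝ) := Coprod (Multiplicative (ℝ ⧸ A)) (Multiplicative (ℝ ⧸ A))

/-- Image of `t mod A` in the first free factor. -/
noncomputable def hA (A : AddSubgroup ℝ) (t : ℝ) : GA A :=
  Coprod.inl (Multiplicative.ofAdd (QuotientAddGroup.mk t : ℝ ⧸ A))

/-- Image of `t mod A` in the second free factor. -/
noncomputable def vA (A : AddSubgroup ℝ) (t : ℝ) : GA A :=
  Coprod.inr (Multiplicative.ofAdd (QuotientAddGroup.mk t : ℝ ⧸ A))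

namespace Stmt14Aux

/-- Predecessor of `u` in the finite grid `X` (anything `< u` if there is none). -/
noncomputable def gpred (X : Finset ℝ) (u : ℝ) : ℝ :=
  if h : (X.filter (· < u)).Nonempty then (X.filter (· < u)).max' h else u - 1

lemma gpred_lt (X : Finset ℝ) (u : ℝ) : gpred X u < u := by
  unfold gpred
  split_ifs with h
  · have := (X.filter (· < u)).max'_mem h
    simpa using (Finset.mem_filter.1 this).2
  · linarith

lemma le_gpred {X : Finset ℝ} {z u : ℝ} (hz : z ∈ X) (h : z < u) : z ≤ gpred X u := by
  have hmem : z ∈ X.filter (· < u) := Finset.mem_filter.2 ⟨hz, h⟩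
  unfold gpred
  rw [dif_pos ⟨z, hmem⟩]
  exact Finset.le_max' _ _ hmem

/-- `ℤ`-valued indicator of the half-open interval `[a, b)`. -/
noncomputable def ind (a b u : ℝ) : ℤ := if a ≤ u ∧ u < b then 1 else 0

variable {M : Type*} [AddCommGroup M]

lemma oneD (X : Finset ℝ) {a b : ℝ} (ha : a ∈ X) (hb : b ∈ X) (hab : a < b) (g : ℝ → M) :
    ∑ u ∈ X, (ind a b (gpred X u) - ind a b u) • g u = g b - g a := by
  have key : ∀ u ∈ X, (ind a b (gpred X u) - ind a b u) • g u
      = (if u = b then g b else 0) - (if u = a then g a else 0) := by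
    intro u _
    rcases lt_trichotomy u a with h | h | h
    · have i1 : ind a b u = 0 := if_neg (by push_neg; intro h'; linarith)
      have i2 : ind a b (gpred X u) = 0 := if_neg (by
        push_neg; intro h'
        have := gpred_lt X u; linarith)
      rw [if_neg (by rintro rfl; linarith), if_neg (by rintro rfl; linarith)]
      simp [i1, i2]
    · have i1 : ind a b u = 1 := if_pos ⟨h.ge, by rw [h]; exact hab⟩
      have i2 : ind a b (gpred X u) = 0 := if_neg (by
        push_neg; intro h'
        have := gpred_lt X u; linarith)
      rw [if_neg (by rintro rfl; linarith), if_pos h]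
      rw [h] at i1 i2 ⊢
      simp [i1, i2]
    · rcases lt_trichotomy u b with h2 | h2 | h2
      · have i1 : ind a b u = 1 := if_pos ⟨le_of_lt h, h2⟩
        have i2 : ind a b (gpred X u) = 1 := if_pos ⟨le_gpred ha h, lt_trans (gpred_lt X u) h2⟩
        rw [if_neg (by rintro rfl; linarith), if_neg (by rintro rfl; linarith)]
        simp [i1, i2]
      · have i1 : ind a b u = 0 := if_neg (by push_neg; intro _; exact h2.ge)
        have i2 : ind a b (gpred X u) = 1 := if_pos ⟨le_gpred ha (by rw [h2]; exact hab),
          by rw [h2]; exact gpred_lt X b⟩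
        rw [if_pos h2, if_neg (by rintro rfl; linarith)]
        rw [h2] at i1 i2 ⊢
        simp [i1, i2]
      · have i1 : ind a b u = 0 := if_neg (by push_neg; intro _; linarith)
        have i2 : ind a b (gpred X u) = 0 := if_neg (by
          push_neg; intro _
          exact le_gpred hb h2)
        rw [if_neg (by rintro rfl; linarith), if_neg (by rintro rfl; linarith)]
        simp [i1, i2]
  rw [Finset.sum_congr rfl key, Finset.sum_sub_distrib,
    Finset.sum_ite_eq' X b (fun _ => g b), Finset.sum_ite_eq' X a (fun _ => g a),
    if_pos hb, if_pos ha]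

lemma twoD (X Y : Finset ℝ) {a b c d : ℝ} (ha : a ∈ X) (hb : b ∈ X) (hab : a < b)
    (hc : c ∈ Y) (hd : d ∈ Y) (hcd : c < d) (f : ℝ → ℝ → M) :
    ∑ u ∈ X, ∑ v ∈ Y,
        ((ind a b (gpred X u) - ind a b u) * (ind c d (gpred Y v) - ind c d v)) • f u v
      = f b d - f a d - f b c + f a c := by
  have inner : ∀ u : ℝ, ∑ v ∈ Y,
      ((ind a b (gpred X u) - ind a b u) * (ind c d (gpred Y v) - ind c d v)) • f u v
      = (ind a b (gpred X u) - ind a b u) • (f u d - f u c) := by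
    intro u
    rw [← oneD Y hc hd hcd (f u), Finset.smul_sum]
    exact Finset.sum_congr rfl fun v _ => (smul_smul _ _ _).symm
  rw [Finset.sum_congr rfl fun u _ => inner u, oneD X ha hb hab (fun u => f u d - f u c)]
  abel

lemma tiling_corners {t₁ t₂ : ℝ} (ht₁ : 0 < t₁) (ht₂ : 0 < t₂)
    (n : ℕ) (x y w h : Fin n → ℝ)
    (hw : ∀ i, 0 < w i) (hh : ∀ i, 0 < h i)
    (hdisj : Pairwise fun i j =>
      Disjoint (orect (x i) (y i) (w i) (h i)) (orect (x j) (y j) (w j) (h j)))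
    (hU : (⋃ i, rect (x i) (y i) (w i) (h i)) = rect 0 0 t₁ t₂)
    (f : ℝ → ℝ → M) :
    ∑ i : Fin n,
        (f (x i + w i) (y i + h i) - f (x i) (y i + h i) - f (x i + w i) (y i) + f (x i) (y i))
      = f t₁ t₂ - f 0 t₂ - f t₁ 0 + f 0 0 := by
  classical
  -- bounds on the tiles
  have hsub : ∀ i, rect (x i) (y i) (w i) (h i) ⊆ rect 0 0 t₁ t₂ := by
    intro i
    rw [← hU]
    exact Set.subset_iUnion (fun i => rect (x i) (y i) (w i) (h i)) i
  have hbounds : ∀ i, 0 ≤ x i ∧ x i + w i ≤ t₁ ∧ 0 ≤ y i ∧ y i + h i ≤ t₂ := by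
    intro i
    have m1 : ((x i, y i) : ℝ × ℝ) ∈ rect (x i) (y i) (w i) (h i) := by
      simp only [rect, Set.mem_prod, Set.mem_Icc]
      refine ⟨⟨?_, ?_⟩, ?_, ?_⟩ <;> linarith [hw i, hh i]
    have m2 : ((x i + w i, y i + h i) : ℝ × ℝ) ∈ rect (x i) (y i) (w i) (h i) := by
      simp only [rect, Set.mem_prod, Set.mem_Icc]
      refine ⟨⟨?_, ?_⟩, ?_, ?_⟩ <;> linarith [hw i, hh i]
    have c1 := hsub i m1
    have c2 := hsub i m2
    simp only [rect, Set.mem_prod, Set.mem_Icc, zero_add] at c1 c2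
    exact ⟨c1.1.1, c2.1.2, c1.2.1, c2.2.2⟩
  have hx0 : ∀ i, 0 ≤ x i := fun i => (hbounds i).1
  have hxw : ∀ i, x i + w i ≤ t₁ := fun i => (hbounds i).2.1
  have hy0 : ∀ i, 0 ≤ y i := fun i => (hbounds i).2.2.1
  have hyh : ∀ i, y i + h i ≤ t₂ := fun i => (hbounds i).2.2.2
  -- half-open covering
  have cover : ∀ s t : ℝ, 0 ≤ s → s < t₁ → 0 ≤ t → t < t₂ →
      ∃ i, x i ≤ s ∧ s < x i + w i ∧ y i ≤ t ∧ t < y i + h i := by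
    intro s t hs hst ht htt
    set T : Finset ℝ := insert (t₁ - s) (insert (t₂ - t)
      (Finset.univ.biUnion fun i =>
        {x i - s, x i + w i - s, y i - t, y i + h i - t})) with hT
    set S : Finset ℝ := T.filter (0 < ·) with hS
    have hne : S.Nonempty := ⟨t₁ - s, Finset.mem_filter.2 ⟨by simp [hT], by
      show (0:ℝ) < t₁ - s; linarith⟩⟩
    set ε : ℝ := S.min' hne / 2 with hε
    have hminpos : 0 < S.min' hne := by
      have := S.min'_mem hne
      exact (Finset.mem_filter.1 this).2
    have hεpos : 0 < ε := by positivity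
    have hkey : ∀ r : ℝ, r ∈ T → 0 < r → ε < r := by
      intro r hr hrpos
      have h1 : S.min' hne ≤ r := Finset.min'_le _ _ (Finset.mem_filter.2 ⟨hr, hrpos⟩)
      rw [hε]; linarith
    have ht₁T : t₁ - s ∈ T := by simp [hT]
    have ht₂T : t₂ - t ∈ T := by simp [hT]
    have hεt₁ : s + ε < t₁ := by
      have := hkey (t₁ - s) ht₁T (by linarith); linarith
    have hεt₂ : t + ε < t₂ := by
      have := hkey (t₂ - t) ht₂T (by linarith); linarith
    have hmem : ((s + ε, t + ε) : ℝ × ℝ) ∈ rect 0 0 t₁ t₂ := by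
      simp only [rect, Set.mem_prod, Set.mem_Icc, zero_add]
      refine ⟨⟨?_, ?_⟩, ?_, ?_⟩ <;> linarith
    rw [← hU, Set.mem_iUnion] at hmem
    obtain ⟨i, hi⟩ := hmem
    simp only [rect, Set.mem_prod, Set.mem_Icc] at hi
    obtain ⟨⟨hi1, hi2⟩, hi3, hi4⟩ := hi
    have hxmem : x i - s ∈ T := by
      simp only [hT, Finset.mem_insert, Finset.mem_biUnion, Finset.mem_univ, true_and]
      right; right; exact ⟨i, by simp⟩
    have hymem : y i - t ∈ T := by
      simp only [hT, Finset.mem_insert, Finset.mem_biUnion, Finset.mem_univ, true_and]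
      right; right; exact ⟨i, by simp⟩
    refine ⟨i, ?_, by linarith, ?_, by linarith⟩
    · by_contra hcon
      push_neg at hcon
      have := hkey (x i - s) hxmem (by linarith)
      linarith
    · by_contra hcon
      push_neg at hcon
      have := hkey (y i - t) hymem (by linarith)
      linarith
  -- half-open disjointness
  have hdisj' : ∀ s t : ℝ, ∀ i j, i ≠ j →
      x i ≤ s → s < x i + w i → y i ≤ t → t < y i + h i →
      x j ≤ s → s < x j + w j → y j ≤ t → t < y j + h j → False := by
    intro s t i j hij hi1 hi2 hi3 hi4 hj1 hj2 hj3 hj4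
    set m : ℝ := min (min (x i + w i - s) (x j + w j - s))
      (min (y i + h i - t) (y j + h j - t)) with hm
    have hmpos : 0 < m :=
      lt_min (lt_min (by linarith) (by linarith)) (lt_min (by linarith) (by linarith))
    set ε : ℝ := m / 2 with hε
    have hεpos : 0 < ε := by positivity
    have hεlt : ε < m := by rw [hε]; linarith
    have e1 : ε < x i + w i - s := lt_of_lt_of_le hεlt (le_trans (min_le_left _ _) (min_le_left _ _))
    have e2 : ε < x j + w j - s := lt_of_lt_of_le hεlt (le_trans (min_le_left _ _) (min_le_right _ _))
    have e3 : ε < y i + h i - t := lt_of_lt_of_le hεlt (le_trans (min_le_right _ _) (min_le_left _ _))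
    have e4 : ε < y j + h j - t := lt_of_lt_of_le hεlt (le_trans (min_le_right _ _) (min_le_right _ _))
    have pmi : ((s + ε, t + ε) : ℝ × ℝ) ∈ orect (x i) (y i) (w i) (h i) := by
      simp only [orect, Set.mem_prod, Set.mem_Ioo]
      refine ⟨⟨?_, ?_⟩, ?_, ?_⟩ <;> linarith
    have pmj : ((s + ε, t + ε) : ℝ × ℝ) ∈ orect (x j) (y j) (w j) (h j) := by
      simp only [orect, Set.mem_prod, Set.mem_Ioo]
      refine ⟨⟨?_, ?_⟩, ?_, ?_⟩ <;> linarith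
    exact Set.disjoint_left.1 (hdisj hij) pmi pmj
  -- indicator identity
  have hterm : ∀ a b c d s t : ℝ,
      ind a b s * ind c d t = if (a ≤ s ∧ s < b) ∧ (c ≤ t ∧ t < d) then 1 else 0 := by
    intro a b c d s t
    unfold ind
    split_ifs with h1 h2 h3 h4 h5 <;> first | rfl | tauto
  have indsum : ∀ s t : ℝ,
      ∑ i : Fin n, ind (x i) (x i + w i) s * ind (y i) (y i + h i) t
        = ind 0 t₁ s * ind 0 t₂ t := by
    intro s t
    by_cases hbig : (0 ≤ s ∧ s < t₁) ∧ (0 ≤ t ∧ t < t₂)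
    · obtain ⟨i₀, hi₀⟩ := cover s t hbig.1.1 hbig.1.2 hbig.2.1 hbig.2.2
      rw [hterm, if_pos hbig]
      rw [Finset.sum_eq_single i₀]
      · rw [hterm, if_pos ⟨⟨hi₀.1, hi₀.2.1⟩, hi₀.2.2⟩]
      · intro j _ hj
        rw [hterm, if_neg]
        rintro ⟨⟨hj1, hj2⟩, hj3, hj4⟩
        exact hdisj' s t j i₀ hj hj1 hj2 hj3 hj4 hi₀.1 hi₀.2.1 hi₀.2.2.1 hi₀.2.2.2
      · intro habs
        exact absurd (Finset.mem_univ i₀) habs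
    · rw [hterm, if_neg hbig]
      apply Finset.sum_eq_zero
      intro i _
      rw [hterm, if_neg]
      rintro ⟨⟨h1, h2⟩, h3, h4⟩
      exact hbig ⟨⟨le_trans (hx0 i) h1, lt_of_lt_of_le h2 (hxw i)⟩,
        ⟨le_trans (hy0 i) h3, lt_of_lt_of_le h4 (hyh i)⟩⟩
  -- the grids
  set X : Finset ℝ := insert 0 (insert t₁
    ((Finset.image x Finset.univ) ∪ (Finset.image (fun i => x i + w i) Finset.univ))) with hX
  set Y : Finset ℝ := insert 0 (insert t₂
    ((Finset.image y Finset.univ) ∪ (Finset.image (fun i => y i + h i) Finset.univ))) with hY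
  have h0X : (0:ℝ) ∈ X := Finset.mem_insert_self _ _
  have ht₁X : t₁ ∈ X := Finset.mem_insert_of_mem (Finset.mem_insert_self _ _)
  have hxX : ∀ i, x i ∈ X := fun i =>
    Finset.mem_insert_of_mem (Finset.mem_insert_of_mem
      (Finset.mem_union_left _ (Finset.mem_image_of_mem x (Finset.mem_univ i))))
  have hxwX : ∀ i, x i + w i ∈ X := fun i =>
    Finset.mem_insert_of_mem (Finset.mem_insert_of_mem
      (Finset.mem_union_right _ (Finset.mem_image_of_mem (fun i => x i + w i) (Finset.mem_univ i))))
  have h0Y : (0:ℝ) ∈ Y := Finset.mem_insert_self _ _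
  have ht₂Y : t₂ ∈ Y := Finset.mem_insert_of_mem (Finset.mem_insert_self _ _)
  have hyY : ∀ i, y i ∈ Y := fun i =>
    Finset.mem_insert_of_mem (Finset.mem_insert_of_mem
      (Finset.mem_union_left _ (Finset.mem_image_of_mem y (Finset.mem_univ i))))
  have hyhY : ∀ i, y i + h i ∈ Y := fun i =>
    Finset.mem_insert_of_mem (Finset.mem_insert_of_mem
      (Finset.mem_union_right _ (Finset.mem_image_of_mem (fun i => y i + h i) (Finset.mem_univ i))))
  -- expand each tile via the grid
  have expand : ∀ i ∈ (Finset.univ : Finset (Fin n)),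
      f (x i + w i) (y i + h i) - f (x i) (y i + h i) - f (x i + w i) (y i) + f (x i) (y i)
        = ∑ u ∈ X, ∑ v ∈ Y,
            ((ind (x i) (x i + w i) (gpred X u) - ind (x i) (x i + w i) u)
              * (ind (y i) (y i + h i) (gpred Y v) - ind (y i) (y i + h i) v)) • f u v := by
    intro i _
    exact (twoD X Y (hxX i) (hxwX i) (by linarith [hw i]) (hyY i) (hyhY i)
      (by linarith [hh i]) f).symm
  rw [Finset.sum_congr rfl expand, Finset.sum_comm]
  have swap2 : ∀ u ∈ X,
      ∑ i : Fin n, ∑ v ∈ Y,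
          ((ind (x i) (x i + w i) (gpred X u) - ind (x i) (x i + w i) u)
            * (ind (y i) (y i + h i) (gpred Y v) - ind (y i) (y i + h i) v)) • f u v
        = ∑ v ∈ Y, ((ind 0 t₁ (gpred X u) - ind 0 t₁ u)
            * (ind 0 t₂ (gpred Y v) - ind 0 t₂ v)) • f u v := by
    intro u _
    rw [Finset.sum_comm]
    apply Finset.sum_congr rfl
    intro v _
    rw [← Finset.sum_smul]
    congr 1
    have e : ∀ i : Fin n,
        (ind (x i) (x i + w i) (gpred X u) - ind (x i) (x i + w i) u)
          * (ind (y i) (y i + h i) (gpred Y v) - ind (y i) (y i + h i) v)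
        = ind (x i) (x i + w i) (gpred X u) * ind (y i) (y i + h i) (gpred Y v)
          - ind (x i) (x i + w i) (gpred X u) * ind (y i) (y i + h i) v
          - ind (x i) (x i + w i) u * ind (y i) (y i + h i) (gpred Y v)
          + ind (x i) (x i + w i) u * ind (y i) (y i + h i) v := fun i => by ring
    rw [Finset.sum_congr rfl fun i _ => e i, Finset.sum_add_distrib, Finset.sum_sub_distrib,
      Finset.sum_sub_distrib, indsum, indsum, indsum, indsum]
    ring
  rw [Finset.sum_congr rfl swap2]
  exact twoD X Y h0X ht₁X ht₁ h0Y ht₂Y ht₂ f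

end Stmt14Aux

/-- For a subgroup `A ≤ ℝ`, the commutator `[h(t₁), v(t₂)]` in `(ℝ/A) ∗ (ℝ/A)` is trivial
iff `t₁ ∈ A` or `t₂ ∈ A`; consequently, if a `t₁ × t₂` rectangle is partitioned into
rectangles each having a side of length in `A`, then `t₁ ∈ A` or `t₂ ∈ A`. -/
theorem stmt14 (A : AddSubgroup ℝ) (t₁ t₂ : ℝ) :
    (hA A t₁ * vA A t₂ * (hA A t₁)⁻¹ * (vA A t₂)⁻¹ = 1 ↔ t₁ ∈ A ∨ t₂ ∈ A) ∧
    ((0 < t₁ ∧ 0 < t₂) →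
      ∀ (n : ℕ) (x y w h : Fin n → ℝ),
      (∀ i, 0 < w i) → (∀ i, 0 < h i) →
      (∀ i, w i ∈ A ∨ h i ∈ A) →
      (Pairwise fun i j =>
        Disjoint (orect (x i) (y i) (w i) (h i)) (orect (x j) (y j) (w j) (h j))) →
      (⋃ i, rect (x i) (y i) (w i) (h i)) = rect 0 0 t₁ t₂ →
      t₁ ∈ A ∨ t₂ ∈ A) := by
  classical
  constructor
  · constructor
    · -- commutator trivial → t₁ ∈ A ∨ t₂ ∈ A
      intro hcom
      by_contra hcon
      push_neg at hcon
      obtain ⟨h1, h2⟩ := hcon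
      set a : Multiplicative (ℝ ⧸ A) :=
        Multiplicative.ofAdd (QuotientAddGroup.mk t₁ : ℝ ⧸ A) with haa
      set b : Multiplicative (ℝ ⧸ A) :=
        Multiplicative.ofAdd (QuotientAddGroup.mk t₂ : ℝ ⧸ A) with hbb
      have ha : a ≠ 1 := fun hcontr =>
        h1 ((QuotientAddGroup.eq_zero_iff t₁).1 hcontr)
      have hb : b ≠ 1 := fun hcontr =>
        h2 ((QuotientAddGroup.eq_zero_iff t₂).1 hcontr)
      let F : Bool → Type := fun _ => Multiplicative (ℝ ⧸ A)
      let φ : GA A →* Monoid.CoprodI F :=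
        Coprod.lift (Monoid.CoprodI.of (M := F) (i := false))
          (Monoid.CoprodI.of (M := F) (i := true))
      have hl : φ (Coprod.inl a) = Monoid.CoprodI.of (M := F) (i := false) a :=
        Coprod.lift_apply_inl _ _ _
      have hr : φ (Coprod.inr b) = Monoid.CoprodI.of (M := F) (i := true) b :=
        Coprod.lift_apply_inr _ _ _
      have himg : φ (hA A t₁ * vA A t₂ * (hA A t₁)⁻¹ * (vA A t₂)⁻¹)
          = Monoid.CoprodI.of (M := F) (i := false) a * Monoid.CoprodI.of (M := F) (i := true) b
            * Monoid.CoprodI.of (M := F) (i := false) a⁻¹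
            * Monoid.CoprodI.of (M := F) (i := true) b⁻¹ := by
        rw [show hA A t₁ = Coprod.inl a from rfl, show vA A t₂ = Coprod.inr b from rfl]
        rw [map_mul, map_mul, map_mul, map_inv φ, map_inv φ, hl, hr,
          map_inv (Monoid.CoprodI.of (M := F) (i := false)),
          map_inv (Monoid.CoprodI.of (M := F) (i := true))]
      rw [hcom, map_one] at himg
      have hft : (false : Bool) ≠ true := by decide
      have htf : (true : Bool) ≠ false := by decide
      let wrd : Monoid.CoprodI.NeWord F false true :=
        Monoid.CoprodI.NeWord.append
          (Monoid.CoprodI.NeWord.append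
            (Monoid.CoprodI.NeWord.append
              (Monoid.CoprodI.NeWord.singleton (i := false) a ha) hft
              (Monoid.CoprodI.NeWord.singleton (i := true) b hb))
            htf
            (Monoid.CoprodI.NeWord.singleton (i := false) a⁻¹ (inv_ne_one.2 ha)))
          hft
          (Monoid.CoprodI.NeWord.singleton (i := true) b⁻¹ (inv_ne_one.2 hb))
      have hprod : wrd.prod = 1 := by
        show (Monoid.CoprodI.NeWord.append _ _ _).prod = 1
        rw [Monoid.CoprodI.NeWord.append_prod, Monoid.CoprodI.NeWord.append_prod,
          Monoid.CoprodI.NeWord.append_prod, Monoid.CoprodI.NeWord.prod_singleton,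
          Monoid.CoprodI.NeWord.prod_singleton, Monoid.CoprodI.NeWord.prod_singleton,
          Monoid.CoprodI.NeWord.prod_singleton]
        exact himg.symm
      have hempty : wrd.toWord = Monoid.CoprodI.Word.empty := by
        apply Monoid.CoprodI.Word.equiv.symm.injective
        show wrd.toWord.prod = Monoid.CoprodI.Word.empty.prod
        rw [Monoid.CoprodI.Word.prod_empty]
        exact hprod
      have hlist : wrd.toList = ([] : List (Σ i, F i)) := by
        have : wrd.toWord.toList = Monoid.CoprodI.Word.empty.toList := by rw [hempty]
        simpa [Monoid.CoprodI.NeWord.toWord] using this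
      exact Monoid.CoprodI.NeWord.toList_ne_nil wrd hlist
    · -- t₁ ∈ A ∨ t₂ ∈ A → commutator trivial
      rintro (hmem | hmem)
      · have : hA A t₁ = 1 := by
          unfold hA
          rw [show (QuotientAddGroup.mk t₁ : ℝ ⧸ A) = 0 from
            (QuotientAddGroup.eq_zero_iff t₁).2 hmem]
          exact map_one Coprod.inl
        rw [this]
        simp only [one_mul, inv_one, mul_one]
        exact mul_inv_cancel (vA A t₂)
      · have : vA A t₂ = 1 := by
          unfold vA
          rw [show (QuotientAddGroup.mk t₂ : ℝ ⧸ A) = 0 from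
            (QuotientAddGroup.eq_zero_iff t₂).2 hmem]
          exact map_one Coprod.inr
        rw [this]
        simp only [one_mul, inv_one, mul_one]
        exact mul_inv_cancel (hA A t₁)
  · -- the tiling statement
    rintro ⟨ht₁, ht₂⟩ n x y w h hw hh hside hdisj hU
    by_contra hcon
    push_neg at hcon
    obtain ⟨h1, h2⟩ := hcon
    have hne1 : (QuotientAddGroup.mk t₁ : ℝ ⧸ A) ≠ 0 :=
      fun hc => h1 ((QuotientAddGroup.eq_zero_iff t₁).1 hc)
    have hne2 : (QuotientAddGroup.mk t₂ : ℝ ⧸ A) ≠ 0 :=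
      fun hc => h2 ((QuotientAddGroup.eq_zero_iff t₂).1 hc)
    set f : ℝ → ℝ → (((ℝ ⧸ A) × (ℝ ⧸ A)) →₀ ℤ) := fun s t =>
      Finsupp.single ((QuotientAddGroup.mk s : ℝ ⧸ A), (QuotientAddGroup.mk t : ℝ ⧸ A)) 1
      with hf
    have hmain := Stmt14Aux.tiling_corners ht₁ ht₂ n x y w h hw hh hdisj hU f
    have hzero : ∀ i ∈ (Finset.univ : Finset (Fin n)),
        f (x i + w i) (y i + h i) - f (x i) (y i + h i) - f (x i + w i) (y i) + f (x i) (y i)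
          = 0 := by
      intro i _
      rcases hside i with hs | hs
      · have hq : (QuotientAddGroup.mk (x i + w i) : ℝ ⧸ A) = QuotientAddGroup.mk (x i) := by
          rw [QuotientAddGroup.eq_iff_sub_mem]
          simpa using hs
        rw [hf]
        simp only [hq]
        abel
      · have hq : (QuotientAddGroup.mk (y i + h i) : ℝ ⧸ A) = QuotientAddGroup.mk (y i) := by
          rw [QuotientAddGroup.eq_iff_sub_mem]
          simpa using hs
        rw [hf]
        simp only [hq]
        abel
    rw [Finset.sum_eq_zero hzero] at hmain
    have heval := congrArg (fun g : ((ℝ ⧸ A) × (ℝ ⧸ A)) →₀ ℤ =>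
      g ((QuotientAddGroup.mk t₁ : ℝ ⧸ A), (QuotientAddGroup.mk t₂ : ℝ ⧸ A))) hmain
    simp [hf, Finsupp.single_apply, Prod.mk.injEq, Ne.symm hne1, Ne.symm hne2,
      QuotientAddGroup.mk_zero] at heval
end

section
/- If a rectangle [0,a]×[0,b] is partitioned into finitely many axis-parallel rectangles each of which has at least one rational side, then a ∈ ℚ or b ∈ ℚ. -/
open Finset

/-- The `k`-th smallest element of `s` (or 0 out of range). -/
noncomputable def enumF (s : Finset ℝ) (k : ℕ) : ℝ :=
  if h : k < s.card then (s.orderIsoOfFin rfl ⟨k, h⟩ : ℝ) else 0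

/-- Index of `v` in the sorted enumeration of `s`. -/
noncomputable def idxF (s : Finset ℝ) (v : ℝ) : ℕ :=
  if h : v ∈ s then (((s.orderIsoOfFin rfl).symm ⟨v, h⟩ : Fin s.card) : ℕ) else 0

lemma idxF_lt {s : Finset ℝ} {v : ℝ} (h : v ∈ s) : idxF s v < s.card := by
  rw [idxF, dif_pos h]; exact Fin.is_lt _

lemma enumF_idxF {s : Finset ℝ} {v : ℝ} (h : v ∈ s) : enumF s (idxF s v) = v := by
  have hidx : idxF s v = (((s.orderIsoOfFin rfl).symm ⟨v, h⟩ : Fin s.card) : ℕ) :=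
    dif_pos h
  rw [hidx, enumF, dif_pos (Fin.is_lt _)]
  simp

lemma enumF_mem {s : Finset ℝ} {k : ℕ} (h : k < s.card) : enumF s k ∈ s := by
  rw [enumF, dif_pos h]; exact (s.orderIsoOfFin rfl ⟨k, h⟩).2

lemma enumF_lt_enumF {s : Finset ℝ} {k l : ℕ} (hl : l < s.card) (hkl : k < l) :
    enumF s k < enumF s l := by
  have hk : k < s.card := hkl.trans hl
  rw [enumF, dif_pos hk, enumF, dif_pos hl]
  exact_mod_cast (s.orderIsoOfFin rfl).strictMono
    (show (⟨k, hk⟩ : Fin s.card) < ⟨l, hl⟩ from hkl)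

lemma enumF_le_enumF {s : Finset ℝ} {k l : ℕ} (hl : l < s.card) (hkl : k ≤ l) :
    enumF s k ≤ enumF s l := by
  rcases hkl.lt_or_eq with h | h
  · exact (enumF_lt_enumF hl h).le
  · rw [h]

lemma lt_of_enumF_lt {s : Finset ℝ} {k l : ℕ} (hk : k < s.card)
    (h : enumF s k < enumF s l) : k < l := by
  by_contra hc
  exact absurd (enumF_le_enumF hk (not_lt.mp hc)) (not_le.mpr h)

lemma le_of_enumF_le {s : Finset ℝ} {k l : ℕ} (hk : k < s.card)
    (h : enumF s k ≤ enumF s l) : k ≤ l := by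
  by_contra hc
  exact absurd (enumF_lt_enumF hk (not_le.mp hc)) (not_lt.mpr h)

lemma idxF_le_idxF {s : Finset ℝ} {u v : ℝ} (hu : u ∈ s) (hv : v ∈ s) (huv : u ≤ v) :
    idxF s u ≤ idxF s v :=
  le_of_enumF_le (idxF_lt hu)
    (by rw [enumF_idxF hu, enumF_idxF hv]; exact huv)

lemma teleF (f : ℝ →ₗ[ℚ] ℝ) (s : Finset ℝ) {u v : ℝ} (hu : u ∈ s) (hv : v ∈ s)
    (huv : u ≤ v) :
    ∑ k ∈ Finset.Ico (idxF s u) (idxF s v), (f (enumF s (k + 1)) - f (enumF s k))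
      = f v - f u := by
  rw [Finset.sum_Ico_eq_sub _ (idxF_le_idxF hu hv huv),
    Finset.sum_range_sub (fun k => f (enumF s k)),
    Finset.sum_range_sub (fun k => f (enumF s k)), enumF_idxF hu, enumF_idxF hv]
  ring

lemma exists_lin (c : ℝ) (hc : ∀ q : ℚ, c ≠ (q : ℝ)) :
    ∃ f : ℝ →ₗ[ℚ] ℝ, f 1 = 0 ∧ f c = 1 := by
  have h1ne : (1 : ℝ) ≠ 0 := one_ne_zero
  have hsing : LinearIndepOn ℚ id ({1} : Set ℝ) :=
    LinearIndepOn.singleton (v := id) h1ne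
  have hcs : c ∉ Submodule.span ℚ ({1} : Set ℝ) := by
    intro hmem
    rw [Submodule.mem_span_singleton] at hmem
    obtain ⟨r, hr⟩ := hmem
    exact hc r (by rw [← hr]; simp [Rat.smul_one_eq_cast])
  have hind : LinearIndepOn ℚ id (insert c ({1} : Set ℝ)) :=
    hsing.id_insert hcs
  set B := Module.Basis.extend hind with hB
  have hsub : (insert c ({1} : Set ℝ)) ⊆ hind.extend (Set.subset_univ _) :=
    hind.subset_extend _
  have hce : c ∈ hind.extend (Set.subset_univ _) := hsub (Set.mem_insert _ _)
  have h1e : (1 : ℝ) ∈ hind.extend (Set.subset_univ _) :=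
    hsub (Set.mem_insert_of_mem _ rfl)
  refine ⟨(Algebra.linearMap ℚ ℝ).comp (B.coord ⟨c, hce⟩), ?_, ?_⟩
  · have : (1 : ℝ) = B ⟨1, h1e⟩ := (Module.Basis.extend_apply_self hind ⟨1, h1e⟩).symm
    have h2 : (B.coord ⟨c, hce⟩) 1 = (B.coord ⟨c, hce⟩) (B ⟨1, h1e⟩) :=
      congrArg _ this
    rw [LinearMap.comp_apply, h2, Module.Basis.coord_apply, Module.Basis.repr_self]
    have hne : (⟨1, h1e⟩ : hind.extend (Set.subset_univ _)) ≠ ⟨c, hce⟩ := by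
      intro hEq
      exact hc 1 (by simpa using (congrArg Subtype.val hEq).symm)
    rw [Finsupp.single_eq_of_ne' hne]
    simp
  · have : c = B ⟨c, hce⟩ := (Module.Basis.extend_apply_self hind ⟨c, hce⟩).symm
    have h2 : (B.coord ⟨c, hce⟩) c = (B.coord ⟨c, hce⟩) (B ⟨c, hce⟩) :=
      congrArg _ this
    rw [LinearMap.comp_apply, h2, Module.Basis.coord_apply, Module.Basis.repr_self]
    simp

/-- If `[0,a] × [0,b]` is partitioned into finitely many axis-parallel rectangles each
having at least one rational side, then `a ∈ ℚ` or `b ∈ ℚ`. -/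
theorem stmt15 (a b : ℝ) (ha : 0 < a) (hb : 0 < b)
    (n : ℕ) (x y w h : Fin n → ℝ)
    (hw : ∀ i, 0 < w i) (hh : ∀ i, 0 < h i)
    (hside : ∀ i, (∃ q : ℚ, w i = q) ∨ (∃ q : ℚ, h i = q))
    (hdisj : Pairwise fun i j =>
      Disjoint (orect (x i) (y i) (w i) (h i)) (orect (x j) (y j) (w j) (h j)))
    (hcover : (⋃ i, rect (x i) (y i) (w i) (h i)) = rect 0 0 a b) :
    (∃ q : ℚ, a = q) ∨ (∃ q : ℚ, b = q) := by
  classical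
  by_contra hcon
  push_neg at hcon
  obtain ⟨ha', hb'⟩ := hcon
  obtain ⟨f1, hf11, hf1a⟩ := exists_lin a ha'
  obtain ⟨f2, hf21, hf2b⟩ := exists_lin b hb'
  obtain ⟨f, hf1, hfa, hfb⟩ : ∃ f : ℝ →ₗ[ℚ] ℝ, f 1 = 0 ∧ f a ≠ 0 ∧ f b ≠ 0 := by
    by_cases h1 : f1 b = 0
    · by_cases h2 : f2 a = 0
      · exact ⟨f1 + f2, by simp [LinearMap.add_apply, hf11, hf21],
          by simp [LinearMap.add_apply, hf1a, h2],
          by simp [LinearMap.add_apply, hf2b, h1]⟩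
      · exact ⟨f2, hf21, h2, by simp [hf2b]⟩
    · exact ⟨f1, hf11, by simp [hf1a], h1⟩
  have frat : ∀ q : ℚ, f (q : ℝ) = 0 := by
    intro q
    have hq1 : (q : ℝ) = q • (1 : ℝ) := by simp [Rat.smul_one_eq_cast]
    rw [hq1, map_smul, hf1, smul_zero]
  -- bounds of subrectangles
  have hsubi : ∀ i, rect (x i) (y i) (w i) (h i) ⊆ rect 0 0 a b := by
    intro i; rw [← hcover]
    exact Set.subset_iUnion (fun j => rect (x j) (y j) (w j) (h j)) i
  have hbnd : ∀ i, 0 ≤ x i ∧ x i + w i ≤ a ∧ 0 ≤ y i ∧ y i + h i ≤ b := by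
    intro i
    have h1 : ((x i, y i) : ℝ × ℝ) ∈ rect (x i) (y i) (w i) (h i) := by
      simp [rect, Set.mem_prod, Set.mem_Icc, (hw i).le, (hh i).le]
    have h2 : ((x i + w i, y i + h i) : ℝ × ℝ) ∈ rect (x i) (y i) (w i) (h i) := by
      simp [rect, Set.mem_prod, Set.mem_Icc, (hw i).le, (hh i).le]
    have h1' := hsubi i h1
    have h2' := hsubi i h2
    rw [rect, Set.mem_prod, Set.mem_Icc, Set.mem_Icc] at h1' h2'
    dsimp only at h1' h2'
    exact ⟨h1'.1.1, by linarith [h2'.1.2], h1'.2.1, by linarith [h2'.2.2]⟩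
  -- the grids
  set s : Finset ℝ :=
    insert 0 (insert a (Finset.univ.biUnion fun i => {x i, x i + w i})) with hs
  set t : Finset ℝ :=
    insert 0 (insert b (Finset.univ.biUnion fun i => {y i, y i + h i})) with ht
  have h0s : (0 : ℝ) ∈ s := by simp [hs]
  have has : a ∈ s := by simp [hs]
  have h0t : (0 : ℝ) ∈ t := by simp [ht]
  have hbt : b ∈ t := by simp [ht]
  have hxs : ∀ i, x i ∈ s := fun i =>
    Finset.mem_insert_of_mem (Finset.mem_insert_of_mem
      (Finset.mem_biUnion.mpr ⟨i, Finset.mem_univ i, by simp⟩))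
  have hxws : ∀ i, x i + w i ∈ s := fun i =>
    Finset.mem_insert_of_mem (Finset.mem_insert_of_mem
      (Finset.mem_biUnion.mpr ⟨i, Finset.mem_univ i, by simp⟩))
  have hyt : ∀ i, y i ∈ t := fun i =>
    Finset.mem_insert_of_mem (Finset.mem_insert_of_mem
      (Finset.mem_biUnion.mpr ⟨i, Finset.mem_univ i, by simp⟩))
  have hyht : ∀ i, y i + h i ∈ t := fun i =>
    Finset.mem_insert_of_mem (Finset.mem_insert_of_mem
      (Finset.mem_biUnion.mpr ⟨i, Finset.mem_univ i, by simp⟩))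
  -- abbreviations
  set dX : ℕ → ℝ := fun k => f (enumF s (k + 1)) - f (enumF s k) with hdX
  set dY : ℕ → ℝ := fun l => f (enumF t (l + 1)) - f (enumF t l) with hdY
  set grid : Finset (ℕ × ℕ) :=
    (Finset.Ico (idxF s 0) (idxF s a)) ×ˢ (Finset.Ico (idxF t 0) (idxF t b)) with hgrid
  set sub : Fin n → Finset (ℕ × ℕ) := fun i =>
    (Finset.Ico (idxF s (x i)) (idxF s (x i + w i))) ×ˢ
      (Finset.Ico (idxF t (y i)) (idxF t (y i + h i))) with hsubdef
  -- telescoping per tile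
  have htel : ∀ i, f (w i) * f (h i) = ∑ p ∈ sub i, dX p.1 * dY p.2 := by
    intro i
    have hx : f (w i) = ∑ k ∈ Finset.Ico (idxF s (x i)) (idxF s (x i + w i)), dX k := by
      rw [show f (w i) = f (x i + w i) - f (x i) by rw [← map_sub]; congr 1; ring]
      exact (teleF f s (hxs i) (hxws i) (by linarith [hw i])).symm
    have hy : f (h i) = ∑ l ∈ Finset.Ico (idxF t (y i)) (idxF t (y i + h i)), dY l := by
      rw [show f (h i) = f (y i + h i) - f (y i) by rw [← map_sub]; congr 1; ring]
      exact (teleF f t (hyt i) (hyht i) (by linarith [hh i])).symm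
    rw [hx, hy, Finset.sum_mul_sum, hsubdef]
    rw [Finset.sum_product]
  -- sub i ⊆ grid
  have hsubgrid : ∀ i, sub i ⊆ grid := by
    intro i
    apply Finset.product_subset_product <;> apply Finset.Ico_subset_Ico
    · exact idxF_le_idxF h0s (hxs i) (hbnd i).1
    · exact idxF_le_idxF (hxws i) has (hbnd i).2.1
    · exact idxF_le_idxF h0t (hyt i) (hbnd i).2.2.1
    · exact idxF_le_idxF (hyht i) hbt (hbnd i).2.2.2
  -- each grid cell lies in exactly one tile
  have hkey : ∀ p ∈ grid, ∃! i : Fin n, p ∈ sub i := by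
    rintro ⟨k, l⟩ hp
    rw [hgrid, Finset.mem_product, Finset.mem_Ico, Finset.mem_Ico] at hp
    obtain ⟨⟨hk0, hka⟩, hl0, hlb⟩ := hp
    have hpa : idxF s a < s.card := idxF_lt has
    have hqb : idxF t b < t.card := idxF_lt hbt
    have hk1 : k + 1 < s.card := lt_of_le_of_lt (Nat.succ_le_of_lt hka) hpa
    have hl1 : l + 1 < t.card := lt_of_le_of_lt (Nat.succ_le_of_lt hlb) hqb
    have hkc : k < s.card := Nat.lt_of_succ_lt hk1
    have hlc : l < t.card := Nat.lt_of_succ_lt hl1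
    set u := (enumF s k + enumF s (k + 1)) / 2 with hu
    set v := (enumF t l + enumF t (l + 1)) / 2 with hv
    have hcx : enumF s k < enumF s (k + 1) := enumF_lt_enumF hk1 (Nat.lt_succ_self k)
    have hcy : enumF t l < enumF t (l + 1) := enumF_lt_enumF hl1 (Nat.lt_succ_self l)
    have hu1 : enumF s k < u := by rw [hu]; linarith
    have hu2 : u < enumF s (k + 1) := by rw [hu]; linarith
    have hv1 : enumF t l < v := by rw [hv]; linarith
    have hv2 : v < enumF t (l + 1) := by rw [hv]; linarith
    have h0k : (0 : ℝ) ≤ enumF s k := by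
      rw [← enumF_idxF h0s]; exact enumF_le_enumF hkc hk0
    have hk1a : enumF s (k + 1) ≤ a := by
      rw [← enumF_idxF has]; exact enumF_le_enumF hpa (Nat.succ_le_of_lt hka)
    have h0l : (0 : ℝ) ≤ enumF t l := by
      rw [← enumF_idxF h0t]; exact enumF_le_enumF hlc hl0
    have hl1b : enumF t (l + 1) ≤ b := by
      rw [← enumF_idxF hbt]; exact enumF_le_enumF hqb (Nat.succ_le_of_lt hlb)
    have huv : ((u, v) : ℝ × ℝ) ∈ rect 0 0 a b := by
      simp only [rect, Set.mem_prod, Set.mem_Icc, zero_add]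
      exact ⟨⟨by linarith, by linarith⟩, by linarith, by linarith⟩
    rw [← hcover] at huv
    obtain ⟨i, hi⟩ := Set.mem_iUnion.mp huv
    simp only [rect, Set.mem_prod, Set.mem_Icc] at hi
    obtain ⟨⟨hxu, hux⟩, hyv, hvy⟩ := hi
    have hmemi : ((k, l) : ℕ × ℕ) ∈ sub i := by
      rw [hsubdef]
      simp only [Finset.mem_product, Finset.mem_Ico]
      refine ⟨⟨?_, ?_⟩, ?_, ?_⟩
      · exact Nat.lt_succ_iff.mp (lt_of_enumF_lt (idxF_lt (hxs i)) (by
          rw [enumF_idxF (hxs i)]; linarith))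
      · exact lt_of_enumF_lt hkc (by rw [enumF_idxF (hxws i)]; linarith)
      · exact Nat.lt_succ_iff.mp (lt_of_enumF_lt (idxF_lt (hyt i)) (by
          rw [enumF_idxF (hyt i)]; linarith))
      · exact lt_of_enumF_lt hlc (by rw [enumF_idxF (hyht i)]; linarith)
    have hin : ∀ m : Fin n, ((k, l) : ℕ × ℕ) ∈ sub m →
        ((u, v) : ℝ × ℝ) ∈ orect (x m) (y m) (w m) (h m) := by
      intro m hm
      rw [hsubdef] at hm
      simp only [Finset.mem_product, Finset.mem_Ico] at hm
      obtain ⟨⟨h1, h2⟩, h3, h4⟩ := hm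
      have e1 : x m ≤ enumF s k := by
        rw [← enumF_idxF (hxs m)]; exact enumF_le_enumF hkc h1
      have e2 : enumF s (k + 1) ≤ x m + w m := by
        rw [← enumF_idxF (hxws m)]
        exact enumF_le_enumF (idxF_lt (hxws m)) (Nat.succ_le_of_lt h2)
      have e3 : y m ≤ enumF t l := by
        rw [← enumF_idxF (hyt m)]; exact enumF_le_enumF hlc h3
      have e4 : enumF t (l + 1) ≤ y m + h m := by
        rw [← enumF_idxF (hyht m)]
        exact enumF_le_enumF (idxF_lt (hyht m)) (Nat.succ_le_of_lt h4)
      simp only [orect, Set.mem_prod, Set.mem_Ioo]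
      exact ⟨⟨by linarith, by linarith⟩, by linarith, by linarith⟩
    refine ⟨i, hmemi, ?_⟩
    intro j hj
    by_contra hne
    exact Set.disjoint_left.mp (hdisj hne) (hin j hj) (hin i hmemi)
  -- assemble
  have hsum : ∑ i : Fin n, f (w i) * f (h i) = f a * f b := by
    calc ∑ i : Fin n, f (w i) * f (h i)
        = ∑ i : Fin n, ∑ p ∈ sub i, dX p.1 * dY p.2 :=
          Finset.sum_congr rfl fun i _ => htel i
      _ = ∑ i : Fin n, ∑ p ∈ grid, if p ∈ sub i then dX p.1 * dY p.2 else 0 := by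
          refine Finset.sum_congr rfl fun i _ => ?_
          rw [Finset.sum_ite_mem, Finset.inter_eq_right.mpr (hsubgrid i)]
      _ = ∑ p ∈ grid, ∑ i : Fin n, if p ∈ sub i then dX p.1 * dY p.2 else 0 :=
          Finset.sum_comm
      _ = ∑ p ∈ grid, dX p.1 * dY p.2 := by
          refine Finset.sum_congr rfl fun p hp => ?_
          obtain ⟨i, hi, huniq⟩ := hkey p hp
          rw [Finset.sum_eq_single i]
          · rw [if_pos hi]
          · intro j _ hji
            rw [if_neg fun hmem => hji (huniq j hmem)]
          · intro habs; exact absurd (Finset.mem_univ i) habs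
      _ = (∑ k ∈ Finset.Ico (idxF s 0) (idxF s a), dX k) *
            (∑ l ∈ Finset.Ico (idxF t 0) (idxF t b), dY l) := by
          rw [Finset.sum_mul_sum, hgrid, Finset.sum_product]
      _ = f a * f b := by
          have hX : ∑ k ∈ Finset.Ico (idxF s 0) (idxF s a), dX k = f a := by
            rw [hdX, teleF f s h0s has ha.le]; simp
          have hY : ∑ l ∈ Finset.Ico (idxF t 0) (idxF t b), dY l = f b := by
            rw [hdY, teleF f t h0t hbt hb.le]; simp
          rw [hX, hY]
  have hzero : ∑ i : Fin n, f (w i) * f (h i) = 0 := by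
    apply Finset.sum_eq_zero
    intro i _
    rcases hside i with ⟨q, hq⟩ | ⟨q, hq⟩
    · rw [hq, frat q, zero_mul]
    · rw [hq, frat q, mul_zero]
  exact mul_ne_zero hfa hfb (by rw [← hsum, hzero])
end
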